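/- Let k ≥ 2 be an integer, Q₁(r) = −(k+1)²r⁴ + 2(k+1)(2k+1)r³ − 2(k+1)(3k+1)r² + 2(2k−1)(k+1)r − (k−1)², and r₀⁻ = ( k(k+2) − √(k(k+2)(2k+1)) ) / ((k+1)(k+2)). Then Q₁(0) = −(k−1)² < 0, Q₁(r₀⁻) = 4(k²+k+1)( √(k(k+2)(2k+1)) − (2k+1) ) / ( (k+1)(k+2)² ) > 0, and Q₁(k/(k+1)) = −(2k+1)/(k+1)² < 0; consequently there exist exactly two real numbers s₀ ∈ (0, r₀⁻) and s₁ ∈ (r₀⁻, k/(k+1)) with Q₁(s₀) = Q₁(s₁) = 0, and Q₁ < 0 on (0, s₀), Q₁ > 0 on (s₀, s₁), and Q₁ < 0 on (s₁, ∞). -/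

import Mathlib

open Real MeasureTheory Set intervalIntegral Filter

set_option maxHeartbeats 1000000

noncomputable def Q₁ (k : ℕ) (r : ℝ) : ℝ :=
  -((k : ℝ) + 1) ^ 2 * r ^ 4 + 2 * ((k : ℝ) + 1) * (2 * (k : ℝ) + 1) * r ^ 3 -
    2 * ((k : ℝ) + 1) * (3 * (k : ℝ) + 1) * r ^ 2 + 2 * (2 * (k : ℝ) - 1) * ((k : ℝ) + 1) * r -
    ((k : ℝ) - 1) ^ 2

noncomputable def Q₂ (k : ℕ) (r : ℝ) : ℝ :=
  -((k : ℝ) + 1) ^ 2 * r ^ 4 + 2 * ((k : ℝ) + 1) * (3 * (k : ℝ) + 1) * r ^ 2 -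
    4 * ((k : ℝ) + 1) * (2 * (k : ℝ) - 1) * r + 3 * ((k : ℝ) - 1) ^ 2

noncomputable def r0minus (k : ℕ) : ℝ :=
  ((k : ℝ) * ((k : ℝ) + 2) - Real.sqrt ((k : ℝ) * ((k : ℝ) + 2) * (2 * (k : ℝ) + 1))) /
    (((k : ℝ) + 1) * ((k : ℝ) + 2))

lemma Q1_hasDerivAt (k : ℕ) (r : ℝ) :
    HasDerivAt (Q₁ k)
      (-(4:ℝ) * ((k:ℝ)+1)^2 * r^3 + 6*((k:ℝ)+1)*(2*(k:ℝ)+1)*r^2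
        - 4*((k:ℝ)+1)*(3*(k:ℝ)+1)*r + 2*(2*(k:ℝ)-1)*((k:ℝ)+1)) r := by
  have H := (((((hasDerivAt_pow 4 r).const_mul (-((k:ℝ)+1)^2)).add
      ((hasDerivAt_pow 3 r).const_mul (2*((k:ℝ)+1)*(2*(k:ℝ)+1)))).sub
      ((hasDerivAt_pow 2 r).const_mul (2*((k:ℝ)+1)*(3*(k:ℝ)+1)))).add
      ((hasDerivAt_id' r).const_mul (2*(2*(k:ℝ)-1)*((k:ℝ)+1)))).sub_const (((k:ℝ)-1)^2)
  refine H.congr_deriv ?_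
  push_cast; ring

lemma Q1_deriv2 (k : ℕ) (x : ℝ) :
    deriv^[2] (Q₁ k) x =
      -(12:ℝ)*((k:ℝ)+1)^2*x^2 + 12*((k:ℝ)+1)*(2*(k:ℝ)+1)*x - 4*((k:ℝ)+1)*(3*(k:ℝ)+1) := by
  have hd1 : deriv (Q₁ k) = fun r : ℝ => -(4:ℝ) * ((k:ℝ)+1)^2 * r^3 + 6*((k:ℝ)+1)*(2*(k:ℝ)+1)*r^2
        - 4*((k:ℝ)+1)*(3*(k:ℝ)+1)*r + 2*(2*(k:ℝ)-1)*((k:ℝ)+1) :=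
    funext fun r => (Q1_hasDerivAt k r).deriv
  have hd2 : HasDerivAt (fun r : ℝ => -(4:ℝ) * ((k:ℝ)+1)^2 * r^3 + 6*((k:ℝ)+1)*(2*(k:ℝ)+1)*r^2
        - 4*((k:ℝ)+1)*(3*(k:ℝ)+1)*r + 2*(2*(k:ℝ)-1)*((k:ℝ)+1))
      (-(12:ℝ)*((k:ℝ)+1)^2*x^2 + 12*((k:ℝ)+1)*(2*(k:ℝ)+1)*x - 4*((k:ℝ)+1)*(3*(k:ℝ)+1)) x := by
    have H := ((((hasDerivAt_pow 3 x).const_mul (-(4:ℝ)*((k:ℝ)+1)^2)).add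
        ((hasDerivAt_pow 2 x).const_mul (6*((k:ℝ)+1)*(2*(k:ℝ)+1)))).sub
        ((hasDerivAt_id' x).const_mul (4*((k:ℝ)+1)*(3*(k:ℝ)+1)))).add_const
        (2*(2*(k:ℝ)-1)*((k:ℝ)+1))
    refine H.congr_deriv ?_
    push_cast; ring
  show deriv (deriv (Q₁ k)) x = _
  rw [hd1, hd2.deriv]

lemma Q1_continuous (k : ℕ) : Continuous (Q₁ k) := by
  unfold Q₁; fun_prop

lemma Q1_strictConcave (k : ℕ) : StrictConcaveOn ℝ Set.univ (Q₁ k) := by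
  apply strictConcaveOn_univ_of_deriv2_neg (Q1_continuous k)
  intro x
  rw [Q1_deriv2]
  have hk0 : (0:ℝ) ≤ (k:ℝ) := Nat.cast_nonneg k
  nlinarith [sq_nonneg (2*((k:ℝ)+1)*x - (2*(k:ℝ)+1)), sq_nonneg ((k:ℝ)+1)]

/-- strict concavity evaluated at a convex combination -/
lemma strictConcave_combo {f : ℝ → ℝ} (h : StrictConcaveOn ℝ Set.univ f) {a b c : ℝ}
    (hab : a < b) (hbc : b < c) :
    ((c-b)/(c-a)) * f a + ((b-a)/(c-a)) * f c < f b := by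
  have hac : a < c := hab.trans hbc
  have hca : (0:ℝ) < c - a := by linarith
  have h1 : 0 < (c-b)/(c-a) := div_pos (by linarith) hca
  have h2 : 0 < (b-a)/(c-a) := div_pos (by linarith) hca
  have hs : (c-b)/(c-a) + (b-a)/(c-a) = 1 := by field_simp; ring
  have H := h.2 (Set.mem_univ a) (Set.mem_univ c) (ne_of_lt hac) h1 h2 hs
  have hb : ((c-b)/(c-a)) • a + ((b-a)/(c-a)) • c = b := by
    simp only [smul_eq_mul]
    field_simp
    ring
  rwa [hb] at H


/-- signs of `Q₁` at `0`, `r₀⁻`, `k/(k+1)`, and the two roots `s₀, s₁` with the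
resulting sign pattern of `Q₁` on `(0, ∞)`. -/
theorem Q1_sign_pattern (k : ℕ) (hk : 2 ≤ k) :
    Q₁ k 0 = -((k : ℝ) - 1) ^ 2 ∧ Q₁ k 0 < 0 ∧
    Q₁ k (r0minus k) =
      4 * ((k : ℝ) ^ 2 + (k : ℝ) + 1) *
        (Real.sqrt ((k : ℝ) * ((k : ℝ) + 2) * (2 * (k : ℝ) + 1)) - (2 * (k : ℝ) + 1)) /
        (((k : ℝ) + 1) * ((k : ℝ) + 2) ^ 2) ∧
    0 < Q₁ k (r0minus k) ∧
    Q₁ k ((k : ℝ) / ((k : ℝ) + 1)) = -(2 * (k : ℝ) + 1) / ((k : ℝ) + 1) ^ 2 ∧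
    Q₁ k ((k : ℝ) / ((k : ℝ) + 1)) < 0 ∧
    ∃ s₀ s₁ : ℝ, s₀ ∈ Set.Ioo 0 (r0minus k) ∧
      s₁ ∈ Set.Ioo (r0minus k) ((k : ℝ) / ((k : ℝ) + 1)) ∧
      Q₁ k s₀ = 0 ∧ Q₁ k s₁ = 0 ∧
      (∀ r ∈ Set.Ioo (0 : ℝ) s₀, Q₁ k r < 0) ∧
      (∀ r ∈ Set.Ioo s₀ s₁, 0 < Q₁ k r) ∧
      (∀ r ∈ Set.Ioi s₁, Q₁ k r < 0) := by
  have hK : (2:ℝ) ≤ (k:ℝ) := by exact_mod_cast hk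
  set K : ℝ := (k:ℝ) with hKdef
  set S : ℝ := Real.sqrt (K * (K + 2) * (2 * K + 1)) with hSdef
  have hDpos : 0 < K * (K + 2) * (2 * K + 1) :=
    mul_pos (mul_pos (by linarith) (by linarith)) (by linarith)
  have hS2 : S ^ 2 = K * (K + 2) * (2 * K + 1) := Real.sq_sqrt hDpos.le
  have hSgt : 2 * K + 1 < S := by
    rw [hSdef, Real.lt_sqrt (by nlinarith)]
    nlinarith
  have hSlt : S < K * (K + 2) := by
    rw [hSdef, Real.sqrt_lt' (by nlinarith)]
    nlinarith
  have hSpos : 0 < S := by nlinarith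
  have hden : (0:ℝ) < (K + 1) * (K + 2) := by nlinarith
  have hr0pos : 0 < r0minus k := div_pos (by nlinarith) hden
  have hr0lt : r0minus k < K / (K + 1) := by
    rw [r0minus, div_lt_div_iff₀ hden (by nlinarith)]
    nlinarith
  -- value at 0
  have hv0 : Q₁ k 0 = -(K - 1) ^ 2 := by simp [Q₁, hKdef]
  have hv0neg : Q₁ k 0 < 0 := by rw [hv0]; nlinarith
  -- value at k/(k+1)
  have hvk : Q₁ k (K / (K + 1)) = -(2 * K + 1) / (K + 1) ^ 2 := by
    have h1 : (K + 1) ≠ 0 := by nlinarith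
    rw [Q₁]
    field_simp
    ring
  have hvkneg : Q₁ k (K / (K + 1)) < 0 := by
    rw [hvk]
    apply div_neg_of_neg_of_pos (by nlinarith) (by nlinarith)
  -- value at r0minus
  have hr : r0minus k * ((K + 1) * (K + 2)) = K * (K + 2) - S := by
    rw [r0minus, div_mul_cancel₀ _ (ne_of_gt hden)]
  have hval : Q₁ k (r0minus k) = 4 * (K ^ 2 + K + 1) * (S - (2 * K + 1)) / ((K + 1) * (K + 2) ^ 2) := by
    rw [eq_div_iff (by nlinarith : ((K + 1) * (K + 2) ^ 2 : ℝ) ≠ 0)]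
    apply mul_right_cancel₀ (by nlinarith : ((K + 1) ^ 3 * (K + 2) ^ 2 : ℝ) ≠ 0)
    rw [Q₁]
    set R : ℝ := r0minus k with hRdef
    linear_combination
      ((-16:ℝ) + (-16:ℝ)*R + (16:ℝ)*R^2 + (-8:ℝ)*R^3 + (8:ℝ)*S + (-8:ℝ)*S*R + (4:ℝ)*S*R^2 + (4:ℝ)*S^2 + (-2:ℝ)*S^2*R + (1:ℝ)*S^3 + (-72:ℝ)*K + (-120:ℝ)*K*R + (112:ℝ)*K*R^2 + (-52:ℝ)*K*R^3 + (40:ℝ)*K*S + (-40:ℝ)*K*S*R + (20:ℝ)*K*S*R^2 + (12:ℝ)*K*S^2 + (-7:ℝ)*K*S^2*R + (2:ℝ)*K*S^3 + (-132:ℝ)*K^2 + (-372:ℝ)*K^2*R + (336:ℝ)*K^2*R^2 + (-146:ℝ)*K^2*R^3 + (78:ℝ)*K^2*S + (-82:ℝ)*K^2*S*R + (41:ℝ)*K^2*S*R^2 + (13:ℝ)*K^2*S^2 + (-9:ℝ)*K^2*S^2*R + (1:ℝ)*K^2*S^3 + (-118:ℝ)*K^3 + (-630:ℝ)*K^3*R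 + (564:ℝ)*K^3*R^2 + (-231:ℝ)*K^3*R^3 + (76:ℝ)*K^3*S + (-88:ℝ)*K^3*S*R + (44:ℝ)*K^3*S*R^2 + (6:ℝ)*K^3*S^2 + (-5:ℝ)*K^3*S^2*R + (-38:ℝ)*K^4 + (-642:ℝ)*K^4*R + (579:ℝ)*K^4*R^2 + (-225:ℝ)*K^4*R^3 + (39:ℝ)*K^4*S + (-52:ℝ)*K^4*S*R + (26:ℝ)*K^4*S*R^2 + (1:ℝ)*K^4*S^2 + (-1:ℝ)*K^4*S^2*R + (20:ℝ)*K^5 + (-405:ℝ)*K^5*R + (372:ℝ)*K^5*R^2 + (-138:ℝ)*K^5*R^3 + (10:ℝ)*K^5*S + (-16:ℝ)*K^5*S*R + (8:ℝ)*K^5*S*R^2 + (23:ℝ)*K^6 + (-155:ℝ)*K^6*R + (146:ℝ)*K^6*R^2 + (-52:ℝ)*K^6*R^3 + (1:ℝ)*K^6*S + (-2:ℝ)*K^6*S*R + (1:ℝ)*K^6*S*R^2 + (8:ℝ)*K^7 + (-33:ℝ)*K^7*R + (32:ℝ)*K^7*R^2 + (-11:ℝ)*K^7*R^3 + (1:ℝ)*K^8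 + (-3:ℝ)*K^8*R + (3:ℝ)*K^8*R^2 + (-1:ℝ)*K^8*R^3) * hr
      + ((-8:ℝ) + (-4:ℝ)*S + (-1:ℝ)*S^2 + (-34:ℝ)*K + (-10:ℝ)*K*S + (-2:ℝ)*K*S^2 + (-59:ℝ)*K^2 + (-8:ℝ)*K^2*S + (-1:ℝ)*K^2*S^2 + (-52:ℝ)*K^3 + (-2:ℝ)*K^3*S + (-23:ℝ)*K^4 + (-4:ℝ)*K^5) * hS2
  have hvalpos : 0 < Q₁ k (r0minus k) := by
    rw [hval]
    apply div_pos
    · have h1 : (0:ℝ) < K ^ 2 + K + 1 := by nlinarith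
      have h2 : (0:ℝ) < S - (2 * K + 1) := by linarith
      nlinarith
    · nlinarith
  -- roots via IVT
  have hcont := Q1_continuous k
  obtain ⟨s₀, hs₀mem, hs₀⟩ := intermediate_value_Ioo hr0pos.le hcont.continuousOn
    (Set.mem_Ioo.2 ⟨hv0neg, hvalpos⟩)
  obtain ⟨s₁, hs₁mem, hs₁⟩ := intermediate_value_Ioo' hr0lt.le hcont.continuousOn
    (Set.mem_Ioo.2 ⟨hvkneg, hvalpos⟩)
  have hconc := Q1_strictConcave k
  refine ⟨hv0, hv0neg, hval, hvalpos, hvk, hvkneg, s₀, s₁, hs₀mem, hs₁mem, hs₀, hs₁, ?_, ?_, ?_⟩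
  · intro r hrmem
    have hcomb := strictConcave_combo hconc hrmem.2 hs₀mem.2
    rw [hs₀] at hcomb
    have hca : (0:ℝ) < r0minus k - r := by linarith [hs₀mem.2, hrmem.2]
    have ht : 0 < (r0minus k - s₀)/(r0minus k - r) := div_pos (by linarith [hs₀mem.2]) hca
    have hu : 0 < (s₀ - r)/(r0minus k - r) := div_pos (by linarith [hrmem.2]) hca
    by_contra hc
    push_neg at hc
    nlinarith [mul_pos hu hvalpos, mul_nonneg ht.le hc]
  · intro r hrmem
    have hcomb := strictConcave_combo hconc hrmem.1 hrmem.2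
    rw [hs₀, hs₁] at hcomb
    simpa using hcomb
  · intro r hrmem
    simp only [Set.mem_Ioi] at hrmem
    have hcomb := strictConcave_combo hconc hs₁mem.1 hrmem
    rw [hs₁] at hcomb
    have hca : (0:ℝ) < r - r0minus k := by linarith [hs₁mem.1]
    have ht : 0 < (r - s₁)/(r - r0minus k) := div_pos (by linarith) hca
    have hu : 0 < (s₁ - r0minus k)/(r - r0minus k) := div_pos (by linarith [hs₁mem.1]) hca
    by_contra hc
    push_neg at hc
    nlinarith [mul_pos ht hvalpos, mul_nonneg hu.le hc]
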